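/- arXiv:1703.02160 — 7 statements merged into one kernel-verified Lean document; each statement's English description precedes it below -/
import Mathlib

section
/- The action of Γ on a Γ-invariant open subset Ω ⊆ Z is properly discontinuous if and only if no two points of Ω are Γ-dynamically related. -/
/-!
A dynamical relation between two points of `Ω` produces infinitely many returns of any compact
neighbourhood of both points, which local compactness lets us choose inside `Ω`. Conversely,
if a compact `K` has infinitely many returns `γ • x_γ ∈ K` with `x_γ ∈ K`, then any cluster point
`(ξ, ξ')` in `K × K` of `γ ↦ (x_γ, γ • x_γ)` along the cofinite filter is a dynamically related
pair.
-/

open Pointwise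

def DynRel (Γ : Type*) {Z : Type*} [Group Γ] [MulAction Γ Z] [TopologicalSpace Z]
    (ξ ξ' : Z) : Prop :=
  ∀ U ∈ nhds ξ, ∀ U' ∈ nhds ξ', {γ : Γ | ((γ • U) ∩ U').Nonempty}.Infinite

open Filter Topology

section

variable {Γ Z : Type*} [Group Γ] [MulAction Γ Z] [TopologicalSpace Z]

theorem DynRel.exists_isCompact_subset_infinite [LocallyCompactSpace Z] {Ω : Set Z}
    (hΩ : IsOpen Ω) {ξ ξ' : Z} (hrel : DynRel Γ ξ ξ') (hξ : ξ ∈ Ω) (hξ' : ξ' ∈ Ω) :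
    ∃ K ⊆ Ω, IsCompact K ∧ {γ : Γ | ((γ • K) ∩ K).Nonempty}.Infinite := by
  obtain ⟨K, hK, hpair, hKΩ⟩ :=
    exists_compact_between (Set.toFinite {ξ, ξ'}).isCompact hΩ (Set.pair_subset hξ hξ')
  have hnhds : ∀ z ∈ ({ξ, ξ'} : Set Z), K ∈ 𝓝 z :=
    fun z hz ↦ mem_interior_iff_mem_nhds.1 (hpair hz)
  exact ⟨K, hKΩ, hK, hrel K (hnhds ξ (by simp)) K (hnhds ξ' (by simp))⟩

theorem dynRel_of_mapClusterPt {ι : Type*} {γ : ι → Γ} (hγ : γ.Injective) {x : ι → Z}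
    {ξ ξ' : Z} (h : MapClusterPt (ξ, ξ') cofinite fun i ↦ (x i, γ i • x i)) :
    DynRel Γ ξ ξ' := by
  intro U hU U' hU'
  have hfreq : ∃ᶠ i in cofinite, x i ∈ U ∧ γ i • x i ∈ U' :=
    h.frequently (prod_mem_nhds hU hU')
  refine ((frequently_cofinite_iff_infinite.1 hfreq).image hγ.injOn).mono ?_
  rintro _ ⟨i, ⟨hi, hi'⟩, rfl⟩
  exact ⟨γ i • x i, Set.smul_mem_smul_set hi, hi'⟩

theorem IsCompact.exists_dynRel_of_infinite {K : Set Z} (hK : IsCompact K)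
    (hinf : {γ : Γ | ((γ • K) ∩ K).Nonempty}.Infinite) :
    ∃ ξ ∈ K, ∃ ξ' ∈ K, DynRel Γ ξ ξ' := by
  have : Infinite {γ : Γ | ((γ • K) ∩ K).Nonempty} := hinf.to_subtype
  have hret : ∀ γ : {γ : Γ | ((γ • K) ∩ K).Nonempty}, ∃ x ∈ K, (γ : Γ) • x ∈ K := by
    rintro ⟨γ, _, ⟨x, hx, rfl⟩, hγx⟩
    exact ⟨x, hx, hγx⟩
  choose x hxK hγxK using hret
  obtain ⟨⟨ξ, ξ'⟩, ⟨hξ, hξ'⟩, hclus⟩ := (hK.prod hK).exists_mapClusterPt (f := cofinite)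
    (u := fun γ ↦ (x γ, (γ : Γ) • x γ))
    (tendsto_principal.2 (Eventually.of_forall fun γ ↦ ⟨hxK γ, hγxK γ⟩))
  exact ⟨ξ, hξ, ξ', hξ', dynRel_of_mapClusterPt Subtype.val_injective hclus⟩

end

theorem properlyDiscontinuous_iff_no_dynRel_general {Γ Z : Type*} [Group Γ] [TopologicalSpace Z]
    [LocallyCompactSpace Z]
    [MulAction Γ Z]
    (Ω : Set Z) (hΩopen : IsOpen Ω) :
    (∀ K : Set Z, K ⊆ Ω → IsCompact K → {γ : Γ | ((γ • K) ∩ K).Nonempty}.Finite) ↔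
      (∀ ξ ∈ Ω, ∀ ξ' ∈ Ω, ¬ DynRel Γ ξ ξ') := by
  constructor
  · intro hPD ξ hξ ξ' hξ' hrel
    obtain ⟨K, hKΩ, hK, hinf⟩ := hrel.exists_isCompact_subset_infinite hΩopen hξ hξ'
    exact hinf (hPD K hKΩ hK)
  · intro hno K hKΩ hK
    by_contra hinf
    obtain ⟨ξ, hξ, ξ', hξ', hrel⟩ := hK.exists_dynRel_of_infinite hinf
    exact hno ξ (hKΩ hξ) ξ' (hKΩ hξ') hrel

theorem properlyDiscontinuous_iff_no_dynRel {Γ Z : Type*} [Group Γ] [TopologicalSpace Z]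
    [TopologicalSpace.MetrizableSpace Z] [LocallyCompactSpace Z]
    [MulAction Γ Z] [ContinuousConstSMul Γ Z]
    (Ω : Set Z) (hΩopen : IsOpen Ω) (hΩinv : ∀ γ : Γ, γ • Ω = Ω) :
    (∀ K : Set Z, K ⊆ Ω → IsCompact K → {γ : Γ | ((γ • K) ∩ K).Nonempty}.Finite) ↔
      (∀ ξ ∈ Ω, ∀ ξ' ∈ Ω, ¬ DynRel Γ ξ ξ') :=
  properlyDiscontinuous_iff_no_dynRel_general Ω hΩopen
end

section
/- If a sequence of homeomorphisms g_k of a compact metrizable space Z with at least three points converges to the constant map with value α uniformly on compact subsets of Z ∖ {ω}, then the sequence of inverses g_k^{-1} converges to the constant map with value ω uniformly on compact subsets of Z ∖ {α}. -/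
open Filter Set Topology

theorem Equiv.image_compl_subset_compl_iff {X Y : Type*} (e : X ≃ Y) {A : Set X} {B : Set Y} :
    e '' Aᶜ ⊆ Bᶜ ↔ e.symm '' B ⊆ A := by
  rw [image_subset_iff, e.image_symm_eq_preimage, preimage_compl, compl_subset_compl]

/-- `g` converges along `l` to the quasiconstant map `α_ω`. -/
def ConvergesToQuasiconstant {Z ι : Type*} [TopologicalSpace Z] (g : ι → Z ≃ₜ Z) (l : Filter ι)
    (α ω : Z) : Prop :=
  ∀ K : Set Z, K ⊆ {ω}ᶜ → IsCompact K → ∀ V ∈ 𝓝 α, ∀ᶠ k in l, (g k : Z → Z) '' K ⊆ V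

theorem ConvergesToQuasiconstant.symm {Z ι : Type*} [TopologicalSpace Z] [CompactSpace Z]
    [T2Space Z] {g : ι → Z ≃ₜ Z} {l : Filter ι} {α ω : Z}
    (h : ConvergesToQuasiconstant g l α ω) :
    ConvergesToQuasiconstant (fun k ↦ (g k).symm) l ω α := by
  intro K hKα hK V hV
  obtain ⟨U, hUV, hU, hωU⟩ := mem_nhds_iff.mp hV
  have hUω : Uᶜ ⊆ {ω}ᶜ := compl_subset_compl.mpr (singleton_subset_iff.mpr hωU)
  have hαK : α ∉ K := fun hα ↦ hKα hα rfl
  -- `g k` pushing the compact set `Uᶜ` off `K` is the same as `(g k)⁻¹` pulling `K` into `U`.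
  filter_upwards [h Uᶜ hUω hU.isClosed_compl.isCompact Kᶜ (hK.isClosed.compl_mem_nhds hαK)]
    with k hk
  exact ((g k).toEquiv.image_compl_subset_compl_iff.mp hk).trans hUV

theorem inverse_converges_to_repeller_general {Z : Type*} [TopologicalSpace Z] [CompactSpace Z]
    [TopologicalSpace.MetrizableSpace Z]
    (g : ℕ → Homeomorph Z Z) (α ω : Z)
    (h : ∀ K : Set Z, K ⊆ {ω}ᶜ → IsCompact K →
      ∀ V ∈ nhds α, ∀ᶠ k in Filter.atTop, (g k : Z → Z) '' K ⊆ V) :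
    ∀ K : Set Z, K ⊆ {α}ᶜ → IsCompact K →
      ∀ V ∈ nhds ω, ∀ᶠ k in Filter.atTop, ((g k).symm : Z → Z) '' K ⊆ V :=
  ConvergesToQuasiconstant.symm (l := atTop) h

theorem inverse_converges_to_repeller {Z : Type*} [TopologicalSpace Z] [CompactSpace Z]
    [TopologicalSpace.MetrizableSpace Z]
    (hZ : ∃ a b c : Z, a ≠ b ∧ a ≠ c ∧ b ≠ c)
    (g : ℕ → Homeomorph Z Z) (α ω : Z)
    (h : ∀ K : Set Z, K ⊆ {ω}ᶜ → IsCompact K →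
      ∀ V ∈ nhds α, ∀ᶠ k in Filter.atTop, (g k : Z → Z) '' K ⊆ V) :
    ∀ K : Set Z, K ⊆ {α}ᶜ → IsCompact K →
      ∀ V ∈ nhds ω, ∀ᶠ k in Filter.atTop, ((g k).symm : Z → Z) '' K ⊆ V :=
  inverse_converges_to_repeller_general g α ω h
end

section
/- Let Z be a compact metrizable space with at least three points and let (g_k) be a sequence of homeomorphisms of Z. If (g_k) converges to the constant map α uniformly on compact subsets of Z ∖ {ω} and also converges to the constant map α' uniformly on compact subsets of Z ∖ {ω'}, then α = α' and ω = ω'. -/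
/-! If `g_k` tended to `α` away from two distinct points `ω ≠ ω'`, then, since the complements
of disjoint neighbourhoods of `ω` and `ω'` are compact and cover `Z`, it would tend to `α`
uniformly on all of `Z`; a sequence of surjections cannot do that once `Z` has two points.
The attractors agree because a third point `z ∉ {ω, ω'}` has `g_k z → α` and `g_k z → α'`. -/

open Filter Topology Set

theorem TendstoUniformlyOn.union {ι X Y : Type*} [UniformSpace Y]
    {F : ι → X → Y} {f : X → Y} {l : Filter ι} {s t : Set X}
    (hs : TendstoUniformlyOn F f l s) (ht : TendstoUniformlyOn F f l t) :
    TendstoUniformlyOn F f l (s ∪ t) := fun u hu =>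
  ((hs u hu).and (ht u hu)).mono fun _ hn x hx => hx.elim (hn.1 x) (hn.2 x)

section Quasiconst

variable {ι X Y : Type*} [TopologicalSpace X] [UniformSpace Y]

def TendstoQuasiconst (F : ι → X → Y) (l : Filter ι) (α : Y) (ω : X) : Prop :=
  ∀ K : Set X, K ⊆ {ω}ᶜ → IsCompact K → TendstoUniformlyOn F (fun _ => α) l K

theorem TendstoQuasiconst.tendsto_of_ne {F : ι → X → Y} {l : Filter ι} {α : Y} {ω z : X}
    (hF : TendstoQuasiconst F l α ω) (hz : z ≠ ω) : Tendsto (fun n => F n z) l (𝓝 α) :=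
  (hF {z} (singleton_subset_iff.2 hz) isCompact_singleton).tendsto_at rfl

theorem TendstoQuasiconst.tendstoUniformly_of_ne [T2Space X] [CompactSpace X]
    {F : ι → X → Y} {l : Filter ι} {α : Y} {ω ω' : X} (hF : TendstoQuasiconst F l α ω)
    (hF' : TendstoQuasiconst F l α ω') (hω : ω ≠ ω') : TendstoUniformly F (fun _ => α) l := by
  obtain ⟨U, U', hU, hU', hωU, hω'U', hUU'⟩ := t2_separation hω
  have hcover : Uᶜ ∪ U'ᶜ = univ := by
    rw [← compl_inter, hUU'.inter_eq, compl_empty]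
  have hUc := hF Uᶜ (compl_subset_compl.2 (singleton_subset_iff.2 hωU)) hU.isClosed_compl.isCompact
  have hU'c := hF' U'ᶜ (compl_subset_compl.2 (singleton_subset_iff.2 hω'U'))
    hU'.isClosed_compl.isCompact
  rw [← tendstoUniformlyOn_univ, ← hcover]
  exact hUc.union hU'c

end Quasiconst

theorem eq_of_tendstoUniformly_const_of_surjective {ι X Y : Type*} [UniformSpace Y] [T0Space Y]
    {F : ι → X → Y} {l : Filter ι} [l.NeBot] {α : Y}
    (hF : TendstoUniformly F (fun _ => α) l) (hsurj : ∀ n, (F n).Surjective) (p : Y) :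
    p = α := by
  refine (eq_of_uniformity fun {V} hV => ?_).symm
  obtain ⟨n, hn⟩ := (hF V hV).exists
  obtain ⟨x, rfl⟩ := hsurj n p
  exact hn x

theorem exists_ne_ne_of_three {Z : Type*} {a b c : Z} (hab : a ≠ b) (hac : a ≠ c) (hbc : b ≠ c)
    (x y : Z) : ∃ z, z ≠ x ∧ z ≠ y := by
  by_contra! H
  rcases eq_or_ne a x with rfl | ha
  · exact hbc ((H b hab.symm).trans (H c hac.symm).symm)
  rcases eq_or_ne b x with rfl | hb
  · exact hac ((H a hab).trans (H c hbc.symm).symm)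
  exact hab ((H a ha).trans (H b hb).symm)

theorem attractor_repeller_unique {Z : Type*} [MetricSpace Z] [CompactSpace Z]
    (hZ : ∃ a b c : Z, a ≠ b ∧ a ≠ c ∧ b ≠ c)
    (g : ℕ → Homeomorph Z Z) (α ω α' ω' : Z)
    (h : ∀ K : Set Z, K ⊆ {ω}ᶜ → IsCompact K →
      TendstoUniformlyOn (fun k z => (g k : Z → Z) z) (fun _ => α) Filter.atTop K)
    (h' : ∀ K : Set Z, K ⊆ {ω'}ᶜ → IsCompact K →
      TendstoUniformlyOn (fun k z => (g k : Z → Z) z) (fun _ => α') Filter.atTop K) :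
    α = α' ∧ ω = ω' := by
  obtain ⟨a, b, c, hab, hac, hbc⟩ := hZ
  have hg : TendstoQuasiconst (fun k => ⇑(g k)) atTop α ω := h
  have hg' : TendstoQuasiconst (fun k => ⇑(g k)) atTop α' ω' := h'
  obtain ⟨z, hzω, hzω'⟩ := exists_ne_ne_of_three hab hac hbc ω ω'
  have hα : α = α' := tendsto_nhds_unique (hg.tendsto_of_ne hzω) (hg'.tendsto_of_ne hzω')
  subst hα
  refine ⟨rfl, by_contra fun hω => hab ?_⟩
  have hunif := hg.tendstoUniformly_of_ne hg' hω
  have hsurj : ∀ k, (⇑(g k)).Surjective := fun k => (g k).surjective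
  rw [eq_of_tendstoUniformly_const_of_surjective hunif hsurj a,
    eq_of_tendstoUniformly_const_of_surjective hunif hsurj b]
end

section
/- Suppose a group Γ acts by homeomorphisms on a compact metric space (Z, d), preserving a compact subset E, and the action is expanding at E: for every z ∈ E there exist γ ∈ Γ, a constant c > 1, and a neighborhood U of z such that d(γz', γz'') ≥ c·d(z', z'') for all z', z'' ∈ U. Then the action of Γ on Z ∖ E is cocompact: there is a compact subset K ⊆ Z ∖ E with Γ·K = Z ∖ E. -/
/-!
Near each point of `E` some `γ` multiplies the distance to `E` by a factor `> 1`: pull back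
along `γ` a nearest point of `E` to `γ • z`. By compactness one factor `c > 1` works on an
open neighbourhood `O` of `E`. Since `infDist · E` is bounded on the compact space `Z`, the
orbit of any `z ∉ E` cannot stay in `O` forever, so `K = Oᶜ` meets every orbit in `Eᶜ`.
-/

open Pointwise Metric Set Filter Topology

theorem exists_smul_notMem_of_expanding {Γ X : Type*} [Monoid Γ] [MulAction Γ X] {f : X → ℝ}
    (hf : BddAbove (range f)) {O : Set X} {c : ℝ} (hc : 1 < c) (hexp : ∀ x ∈ O, ∃ g : Γ, c * f x ≤ f (g • x)) {x : X} (hx : 0 < f x) :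
    ∃ g : Γ, g • x ∉ O := by
  by_contra! hO
  have hpow : ∀ n : ℕ, ∃ g : Γ, c ^ n * f x ≤ f (g • x) := by
    intro n
    induction n with
    | zero => exact ⟨1, by simp⟩
    | succ n ih =>
      obtain ⟨g, hg⟩ := ih
      obtain ⟨g', hg'⟩ := hexp _ (hO g)
      refine ⟨g' * g, ?_⟩
      calc c ^ (n + 1) * f x = c * (c ^ n * f x) := by ring
        _ ≤ c * f (g • x) := by gcongr
        _ ≤ f ((g' * g) • x) := by rwa [mul_smul]
  obtain ⟨B, hB⟩ := hf
  obtain ⟨n, hn⟩ := pow_unbounded_of_one_lt (B / f x) hc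
  obtain ⟨g, hg⟩ := hpow n
  have hgB : f (g • x) ≤ B := hB (mem_range_self _)
  rw [div_lt_iff₀ hx] at hn
  linarith

theorem iUnion_smul_eq_compl_of_forall_exists_smul_mem {Γ X : Type*} [Group Γ] [MulAction Γ X]
    {E K : Set X} (hE : ∀ γ : Γ, γ • E = E) (hK : K ⊆ Eᶜ) (h : ∀ x ∉ E, ∃ γ : Γ, γ • x ∈ K) :
    ⋃ γ : Γ, γ • K = Eᶜ := by
  refine (iUnion_subset fun γ => ?_).antisymm fun x hx => ?_
  · calc γ • K ⊆ γ • Eᶜ := smul_set_mono hK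
      _ = Eᶜ := by rw [smul_set_compl, hE]
  · obtain ⟨γ, hγ⟩ := h x hx
    exact mem_iUnion.2 ⟨γ⁻¹, mem_smul_set_iff_inv_smul_mem.2 (by rwa [inv_inv])⟩

section MetricSpace

variable {Z Γ : Type*} [MetricSpace Z] [Group Γ] [MulAction Γ Z] [ContinuousConstSMul Γ Z]
  {E : Set Z}

theorem eventually_mul_infDist_le_infDist_smul (hE : IsCompact E) {γ : Γ} (hγE : γ • E = E)
    {e : Z} (he : e ∈ E) {c : ℝ} (hc : 0 ≤ c) {U : Set Z} (hU : U ∈ 𝓝 e)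
    (hexp : ∀ z' ∈ U, ∀ z'' ∈ U, c * dist z' z'' ≤ dist (γ • z') (γ • z'')) :
    ∀ᶠ z in 𝓝 e, c * infDist z E ≤ infDist (γ • z) E := by
  obtain ⟨s, hs, hsU⟩ := Metric.mem_nhds_iff.1 ((smul_mem_nhds_smul_iff γ).2 hU)
  have hnear : ∀ᶠ z in 𝓝 e, γ • z ∈ ball (γ • e) (s / 2) :=
    (continuous_const_smul γ).continuousAt.preimage_mem_nhds (ball_mem_nhds _ (half_pos hs))
  filter_upwards [hU, hnear] with z hzU hz
  obtain ⟨w, hwE, hw⟩ := hE.exists_infDist_eq_dist ⟨e, he⟩ (γ • z)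
  have hγe : γ • e ∈ E := hγE ▸ smul_mem_smul_set he
  -- `w` is at most twice as far from `γ • e` as `γ • z`, so it lies in `γ • U`
  have hw_ball : w ∈ ball (γ • e) s := by
    have := infDist_le_dist_of_mem (x := γ • z) hγe
    rw [mem_ball] at hz ⊢
    calc dist w (γ • e) ≤ dist (γ • z) w + dist (γ • z) (γ • e) := dist_triangle_left _ _ _
      _ < s := by linarith
  obtain ⟨u, huU, rfl⟩ := hsU hw_ball
  have huE : u ∈ E := by rwa [← hγE, smul_mem_smul_set_iff] at hwE
  calc c * infDist z E ≤ c * dist z u := by gcongr; exact infDist_le_dist_of_mem huE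
    _ ≤ dist (γ • z) (γ • u) := hexp z hzU u huU
    _ = infDist (γ • z) E := hw.symm

theorem exists_one_lt_eventually_nhdsSet_mul_infDist_le (hE : IsCompact E)
    (hEinv : ∀ γ : Γ, γ • E = E)
    (hexp : ∀ z ∈ E, ∃ (γ : Γ) (c : ℝ), 1 < c ∧ ∃ U ∈ 𝓝 z,
      ∀ z' ∈ U, ∀ z'' ∈ U, c * dist z' z'' ≤ dist (γ • z') (γ • z'')) :
    ∃ c > 1, ∀ᶠ z in 𝓝ˢ E, ∃ γ : Γ, c * infDist z E ≤ infDist (γ • z) E := by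
  refine hE.induction_on
    (p := fun S => ∃ c > 1, ∀ᶠ z in 𝓝ˢ S, ∃ γ : Γ, c * infDist z E ≤ infDist (γ • z) E)
    ⟨2, one_lt_two, by simp⟩ ?_ ?_ ?_
  · exact fun S T hST ⟨c, hc, hT⟩ => ⟨c, hc, hT.filter_mono (nhdsSet_mono hST)⟩
  · rintro S T ⟨c, hc, hS⟩ ⟨c', hc', hT⟩
    refine ⟨min c c', lt_min hc hc', ?_⟩
    rw [nhdsSet_union, eventually_sup]
    have hmono {a b : ℝ} (hab : a ≤ b) (z : Z) : (∃ γ : Γ, b * infDist z E ≤ infDist (γ • z) E) →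
        ∃ γ : Γ, a * infDist z E ≤ infDist (γ • z) E :=
      fun ⟨γ, hγ⟩ => ⟨γ, le_trans (by gcongr; exact infDist_nonneg) hγ⟩
    exact ⟨hS.mono (hmono (min_le_left _ _)), hT.mono (hmono (min_le_right _ _))⟩
  · intro e he
    obtain ⟨γ, c, hc, U, hU, hUexp⟩ := hexp e he
    have hloc := eventually_mul_infDist_le_infDist_smul hE (hEinv γ) he (by linarith) hU hUexp
    refine ⟨{z | ∀ᶠ y in 𝓝 z, c * infDist y E ≤ infDist (γ • y) E},
      mem_nhdsWithin_of_mem_nhds hloc.eventually_nhds, c, hc, ?_⟩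
    exact eventually_nhdsSet_iff_forall.2 fun z hz => hz.mono fun y hy => ⟨γ, hy⟩

end MetricSpace

theorem expanding_action_cocompact_on_complement {Z : Type*} [MetricSpace Z] [CompactSpace Z]
    {Γ : Type*} [Group Γ] [MulAction Γ Z] [ContinuousConstSMul Γ Z]
    (E : Set Z) (hEcompact : IsCompact E) (hEinv : ∀ γ : Γ, γ • E = E)
    (hexp : ∀ z ∈ E, ∃ (γ : Γ) (c : ℝ), 1 < c ∧ ∃ U ∈ nhds z,
      ∀ z' ∈ U, ∀ z'' ∈ U, c * dist z' z'' ≤ dist (γ • z') (γ • z'')) :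
    ∃ K : Set Z, IsCompact K ∧ K ⊆ Eᶜ ∧ (⋃ γ : Γ, γ • K) = Eᶜ := by
  rcases E.eq_empty_or_nonempty with rfl | hEne
  · exact ⟨univ, isCompact_univ, by simp, by simp [iUnion_const]⟩
  obtain ⟨c, hc, hnhds⟩ := exists_one_lt_eventually_nhdsSet_mul_infDist_le hEcompact hEinv hexp
  obtain ⟨O, hOopen, hEO, hOexp⟩ := mem_nhdsSet_iff_exists.1 hnhds
  have hKE : Oᶜ ⊆ Eᶜ := compl_subset_compl.2 hEO
  refine ⟨Oᶜ, hOopen.isClosed_compl.isCompact, hKE,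
    iUnion_smul_eq_compl_of_forall_exists_smul_mem hEinv hKE fun z hz => ?_⟩
  exact exists_smul_notMem_of_expanding (isCompact_range (continuous_infDist_pt E)).bddAbove hc
    hOexp ((hEcompact.isClosed.notMem_iff_infDist_pos hEne).1 hz)
end

section
/- Let m ≥ 2 and let W be the dihedral Coxeter group of order 2m with length function ℓ (values 0, 1, 1, 2, 2, …, m−1, m−1, m), Bruhat order given by u ≤ v iff u = v or ℓ(u) < ℓ(v), and order-reversing involution ι(w) = w_0 w where w_0 is the unique element of length m. Then the number of balanced thickenings (lower sets S with S ∩ ι(S) = ∅ and S ∪ ι(S) = W) equals 1 if m is odd and 2 if m is even. -/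
/-!
Write `ι w = w₀ * w`, so that `ℓ (ι w) = m - ℓ w`. A balanced thickening `S` contains no `w` with
`2 ℓ w > m`, for then `ι w`, which lies strictly below `w`, would be in `S` as well; by the covering
condition it therefore contains every `w` with `2 ℓ w < m`. So `S` is determined by the middle
layer `2 ℓ w = m`, from each pair `{w, ι w}` of which it takes exactly one element (`ι` has no
fixed points since `w₀ ≠ 1`). That layer is empty for odd `m` and is a single pair for even `m`.
-/

section BalancedThickening

variable {W : Type*} {ℓ : W → ℕ} {ι : W → W} {m : ℕ}

def IsBalancedThickening (ℓ : W → ℕ) (ι : W → W) (S : Finset W) : Prop :=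
  (∀ u v : W, v ∈ S → (u = v ∨ ℓ u < ℓ v) → u ∈ S) ∧ (∀ w ∈ S, ι w ∉ S) ∧
    ∀ w : W, w ∈ S ∨ ι w ∈ S

theorem isBalancedThickening_iff (hle : ∀ w, ℓ w ≤ m) (hlen : ∀ w, ℓ (ι w) = m - ℓ w)
    {S : Finset W} :
    IsBalancedThickening ℓ ι S ↔ ∀ w, w ∈ S ↔ 2 * ℓ w < m ∨ 2 * ℓ w = m ∧ ι w ∉ S := by
  constructor
  · rintro ⟨hlower, hdisj, hcover⟩
    have hupper : ∀ w ∈ S, 2 * ℓ w ≤ m := fun w hw ↦ by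
      by_contra! h
      exact hdisj w hw (hlower _ w hw (Or.inr (by rw [hlen]; omega)))
    refine fun w ↦ ⟨fun hw ↦ (hupper w hw).lt_or_eq.imp_right (⟨·, hdisj w hw⟩), ?_⟩
    rintro (hlt | ⟨-, hιw⟩)
    · refine (hcover w).resolve_right fun hιw ↦ ?_
      have := hupper _ hιw
      rw [hlen] at this
      omega
    · exact (hcover w).resolve_right hιw
  · intro hS
    have hupper : ∀ w ∈ S, 2 * ℓ w ≤ m := fun w hw ↦ by
      rcases (hS w).1 hw with h | ⟨h, -⟩ <;> omega
    refine ⟨?_, fun w hw hιw ↦ ?_, fun w ↦ ?_⟩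
    · rintro u v hv (rfl | hlt)
      · exact hv
      · exact (hS u).2 (Or.inl (by have := hupper v hv; omega))
    · rcases (hS w).1 hw with hlt | ⟨-, hιw'⟩
      · have := hupper _ hιw
        rw [hlen] at this
        omega
      · exact hιw' hιw
    · by_cases hιw : ι w ∈ S
      · exact Or.inr hιw
      · refine Or.inl ((hS w).2 ?_)
        rcases lt_trichotomy (2 * ℓ w) m with h | h | h
        · exact Or.inl h
        · exact Or.inr ⟨h, hιw⟩
        · exact absurd ((hS _).2 (Or.inl (by rw [hlen]; have := hle w; omega))) hιw

theorem IsBalancedThickening.ext (hle : ∀ w, ℓ w ≤ m) (hlen : ∀ w, ℓ (ι w) = m - ℓ w)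
    {S T : Finset W} (hS : IsBalancedThickening ℓ ι S) (hT : IsBalancedThickening ℓ ι T)
    (hmid : ∀ w, 2 * ℓ w = m → (w ∈ S ↔ w ∈ T)) : S = T := by
  ext w
  by_cases hw : 2 * ℓ w = m
  · exact hmid w hw
  · rw [(isBalancedThickening_iff hle hlen).1 hS, (isBalancedThickening_iff hle hlen).1 hT]
    simp only [hw, false_and, or_false]

theorem setOf_isBalancedThickening_eq_singleton [Fintype W] (hle : ∀ w, ℓ w ≤ m)
    (hlen : ∀ w, ℓ (ι w) = m - ℓ w) (hmid : ∀ w, 2 * ℓ w ≠ m) :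
    {S | IsBalancedThickening ℓ ι S} = {Finset.univ.filter fun w ↦ 2 * ℓ w < m} := by
  ext S
  simp [isBalancedThickening_iff hle hlen, hmid, Finset.ext_iff]

theorem apply_eq_of_middle_eq_pair (hlen : ∀ w, ℓ (ι w) = m - ℓ w) (hfix : ∀ w, ι w ≠ w)
    {a b : W} (hmid : ∀ w, 2 * ℓ w = m ↔ w = a ∨ w = b) : ι a = b :=
  ((hmid (ι a)).1 (by rw [hlen]; have := (hmid a).2 (Or.inl rfl); omega)).resolve_left (hfix a)

theorem ne_of_middle_eq_pair (hlen : ∀ w, ℓ (ι w) = m - ℓ w) (hfix : ∀ w, ι w ≠ w)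
    {a b : W} (hmid : ∀ w, 2 * ℓ w = m ↔ w = a ∨ w = b) : a ≠ b :=
  fun h ↦ hfix a ((apply_eq_of_middle_eq_pair hlen hfix hmid).trans h.symm)

theorem isBalancedThickening_insert_filter [Fintype W] [DecidableEq W] (hle : ∀ w, ℓ w ≤ m)
    (hlen : ∀ w, ℓ (ι w) = m - ℓ w) (hfix : ∀ w, ι w ≠ w) {a b : W}
    (hmid : ∀ w, 2 * ℓ w = m ↔ w = a ∨ w = b) :
    IsBalancedThickening ℓ ι (insert a (Finset.univ.filter fun w ↦ 2 * ℓ w < m)) := by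
  have hιa := apply_eq_of_middle_eq_pair hlen hfix hmid
  have hιb := apply_eq_of_middle_eq_pair hlen hfix (fun w ↦ (hmid w).trans or_comm)
  have hab := ne_of_middle_eq_pair hlen hfix hmid
  have hb := (hmid b).2 (Or.inr rfl)
  rw [isBalancedThickening_iff hle hlen]
  intro w
  by_cases hw : 2 * ℓ w = m
  · rcases (hmid w).1 hw with rfl | rfl <;> simp [hιa, hιb, hab.symm, hw, hb]
  · have : w ≠ a := by rintro rfl; exact hw ((hmid w).2 (Or.inl rfl))
    simp [this, hw]

theorem IsBalancedThickening.eq_insert_filter [Fintype W] [DecidableEq W] (hle : ∀ w, ℓ w ≤ m)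
    (hlen : ∀ w, ℓ (ι w) = m - ℓ w) (hfix : ∀ w, ι w ≠ w) {a b : W}
    (hmid : ∀ w, 2 * ℓ w = m ↔ w = a ∨ w = b) {S : Finset W} (hS : IsBalancedThickening ℓ ι S)
    (ha : a ∈ S) : S = insert a (Finset.univ.filter fun w ↦ 2 * ℓ w < m) := by
  have hιa := apply_eq_of_middle_eq_pair hlen hfix hmid
  have hb : 2 * ℓ b = m := (hmid b).2 (Or.inr rfl)
  refine hS.ext hle hlen (isBalancedThickening_insert_filter hle hlen hfix hmid) fun w hw ↦ ?_
  rcases (hmid w).1 hw with rfl | rfl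
  · simp [ha]
  · have hbS : w ∉ S := hιa ▸ hS.2.1 a ha
    simp [hbS, hb, (ne_of_middle_eq_pair hlen hfix hmid).symm]

theorem setOf_isBalancedThickening_eq_pair [Fintype W] [DecidableEq W] (hle : ∀ w, ℓ w ≤ m)
    (hlen : ∀ w, ℓ (ι w) = m - ℓ w) (hfix : ∀ w, ι w ≠ w) {a b : W}
    (hmid : ∀ w, 2 * ℓ w = m ↔ w = a ∨ w = b) :
    {S | IsBalancedThickening ℓ ι S} =
      {insert a (Finset.univ.filter fun w ↦ 2 * ℓ w < m),
        insert b (Finset.univ.filter fun w ↦ 2 * ℓ w < m)} := by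
  have hmid' : ∀ w, 2 * ℓ w = m ↔ w = b ∨ w = a := fun w ↦ (hmid w).trans or_comm
  ext S
  refine ⟨fun hS ↦ ?_, ?_⟩
  · rcases hS.2.2 a with ha | hb
    · exact Or.inl (hS.eq_insert_filter hle hlen hfix hmid ha)
    · rw [apply_eq_of_middle_eq_pair hlen hfix hmid] at hb
      exact Or.inr (hS.eq_insert_filter hle hlen hfix hmid' hb)
  · rintro (rfl | rfl)
    exacts [isBalancedThickening_insert_filter hle hlen hfix hmid,
      isBalancedThickening_insert_filter hle hlen hfix hmid']

theorem ncard_setOf_isBalancedThickening_of_middle_eq_pair [Fintype W] (hle : ∀ w, ℓ w ≤ m)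
    (hlen : ∀ w, ℓ (ι w) = m - ℓ w) (hfix : ∀ w, ι w ≠ w) {a b : W}
    (hmid : ∀ w, 2 * ℓ w = m ↔ w = a ∨ w = b) :
    {S | IsBalancedThickening ℓ ι S}.ncard = 2 := by
  classical
  have hab := ne_of_middle_eq_pair hlen hfix hmid
  have ha : 2 * ℓ a = m := (hmid a).2 (Or.inl rfl)
  rw [setOf_isBalancedThickening_eq_pair hle hlen hfix hmid, Set.ncard_pair]
  intro h
  have := h ▸ Finset.mem_insert_self a _
  simp [hab, ha] at this

end BalancedThickening

theorem dihedral_balanced_thickenings_count_general (m : ℕ) (hm : 2 ≤ m)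
    (W : Type*) [Group W] [Fintype W]
    (ℓ : W → ℕ) (w0 : W)
    (h0 : ∀ w : W, ℓ w = 0 ↔ w = 1)
    (hle : ∀ w : W, ℓ w ≤ m)
    (htwo : ∀ k : ℕ, 1 ≤ k → k ≤ m - 1 →
      (Finset.univ.filter (fun w : W => ℓ w = k)).card = 2)
    (hlen : ∀ w : W, ℓ (w0 * w) = m - ℓ w) :
    {S : Finset W |
        (∀ u v : W, v ∈ S → (u = v ∨ ℓ u < ℓ v) → u ∈ S) ∧
        (∀ w ∈ S, w0 * w ∉ S) ∧
        (∀ w : W, w ∈ S ∨ w0 * w ∈ S)}.ncard = if Odd m then 1 else 2 := by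
  classical
  change {S | IsBalancedThickening ℓ (w0 * ·) S}.ncard = _
  have hw0 : ℓ w0 = m := by simpa [(h0 1).2 rfl] using hlen 1
  have hfix : ∀ w, w0 * w ≠ w := fun w h ↦ by
    rw [mul_eq_right.1 h, (h0 1).2 rfl] at hw0
    omega
  rcases Nat.even_or_odd m with ⟨n, rfl⟩ | hodd
  · obtain ⟨a, b, -, hlayer⟩ := Finset.card_eq_two.1 (htwo n (by omega) (by omega))
    have hmid : ∀ w, 2 * ℓ w = n + n ↔ w = a ∨ w = b := fun w ↦
      (by omega : 2 * ℓ w = n + n ↔ ℓ w = n).trans (by simpa using Finset.ext_iff.1 hlayer w)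
    rw [if_neg (Nat.not_odd_iff_even.2 ⟨n, rfl⟩)]
    exact ncard_setOf_isBalancedThickening_of_middle_eq_pair hle hlen hfix hmid
  · have hmid : ∀ w, 2 * ℓ w ≠ m := fun w h ↦ Nat.not_even_iff_odd.2 hodd ⟨ℓ w, by omega⟩
    rw [if_pos hodd, setOf_isBalancedThickening_eq_singleton hle hlen hmid, Set.ncard_singleton]

theorem dihedral_balanced_thickenings_count (m : ℕ) (hm : 2 ≤ m)
    (W : Type*) [Group W] [Fintype W] [DecidableEq W]
    (ℓ : W → ℕ) (w0 : W)
    (h0 : ∀ w : W, ℓ w = 0 ↔ w = 1)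
    (hw0 : ℓ w0 = m)
    (htop : ∀ w : W, ℓ w = m → w = w0)
    (hle : ∀ w : W, ℓ w ≤ m)
    (htwo : ∀ k : ℕ, 1 ≤ k → k ≤ m - 1 →
      (Finset.univ.filter (fun w : W => ℓ w = k)).card = 2)
    (hcard : Fintype.card W = 2 * m)
    (hlen : ∀ w : W, ℓ (w0 * w) = m - ℓ w) :
    {S : Finset W |
        (∀ u v : W, v ∈ S → (u = v ∨ ℓ u < ℓ v) → u ∈ S) ∧
        (∀ w ∈ S, w0 * w ∉ S) ∧
        (∀ w : W, w ∈ S ∨ w0 * w ∈ S)}.ncard = if Odd m then 1 else 2 :=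
  dihedral_balanced_thickenings_count_general m hm W ℓ w0 h0 hle htwo hlen
end

section
/- Let W be a finite poset with an order-reversing involution ι, let Th ⊆ W be a fat lower set (Th ∪ ι(Th) = W), let Z be a topological space with a group Γ acting by homeomorphisms, let Λ be a set, and let δ: Z × Λ → W be a function. Define Th(Λ) = { ξ ∈ Z : ∃ λ ∈ Λ, δ(ξ, λ) ∈ Th }. Assume: whenever ξ, ξ' ∈ Z are Γ-dynamically related, there exist λ, λ' ∈ Λ with δ(ξ', λ') ≤ ι(δ(ξ, λ)). Then no two points of Z ∖ Th(Λ) are Γ-dynamically related; in particular, if Z is metrizable and locally compact and Z ∖ Th(Λ) is open and Γ-invariant, the Γ-action on Z ∖ Th(Λ) is properly discontinuous. -/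
open Pointwise

open Topology

/-!
A pair of points outside the thickening cannot be related: if `δ ξ' l' ≤ ι (δ ξ l)` and
`δ ξ l ∉ Th`, then fatness puts `ι (δ ξ l)` in `Th`, and since `Th` is a lower set so is
`δ ξ' l'`. Proper discontinuity on a compact set `K` follows by covering `K ×ˢ K` with finitely
many product neighbourhoods, each of which is returned to by only finitely many group elements.
-/

def thickening {Z Λ W : Type*} (δ : Z → Λ → W) (Th : Set W) : Set Z :=
  {ξ | ∃ l, δ ξ l ∈ Th}

theorem not_rel_of_mem_compl_thickening {W : Type*} [LE W] {ι : W → W} {Th : Set W}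
    (hlow : IsLowerSet Th) (hfat : ∀ w, w ∈ Th ∨ ι w ∈ Th) {Z Λ : Type*} {δ : Z → Λ → W}
    {R : Z → Z → Prop} (hkey : ∀ ξ ξ', R ξ ξ' → ∃ l l', δ ξ' l' ≤ ι (δ ξ l))
    {ξ ξ' : Z} (hξ : ξ ∈ (thickening δ Th)ᶜ) (hξ' : ξ' ∈ (thickening δ Th)ᶜ) :
    ¬ R ξ ξ' := fun hR ↦ by
  obtain ⟨l, l', hle⟩ := hkey ξ ξ' hR
  have hι : ι (δ ξ l) ∈ Th := (hfat _).resolve_left fun h ↦ hξ ⟨l, h⟩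
  exact hξ' ⟨l', hlow hle hι⟩

section DynRel

variable {Γ Z : Type*} [Group Γ] [MulAction Γ Z] [TopologicalSpace Z]

theorem exists_mem_nhds_finite_of_not_dynRel {ξ ξ' : Z} (h : ¬ DynRel Γ ξ ξ') :
    ∃ V ∈ 𝓝 (ξ, ξ'), {γ : Γ | ∃ x, (x, γ • x) ∈ V}.Finite := by
  simp only [DynRel, not_forall, Set.not_infinite] at h
  obtain ⟨U, hU, U', hU', hfin⟩ := h
  refine ⟨U ×ˢ U', prod_mem_nhds hU hU', hfin.subset ?_⟩
  rintro γ ⟨x, hx, hγx⟩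
  exact ⟨γ • x, Set.smul_mem_smul_set hx, hγx⟩

theorem IsCompact.finite_smul_inter_nonempty_of_not_dynRel {K : Set Z} (hK : IsCompact K)
    (h : ∀ ξ ∈ K, ∀ ξ' ∈ K, ¬ DynRel Γ ξ ξ') :
    {γ : Γ | ((γ • K) ∩ K).Nonempty}.Finite := by
  have hnhds : ∀ p ∈ K ×ˢ K, ∃ V ∈ 𝓝 p, {γ : Γ | ∃ x, (x, γ • x) ∈ V}.Finite :=
    fun p hp ↦ exists_mem_nhds_finite_of_not_dynRel (h _ hp.1 _ hp.2)
  choose V hV hVfin using hnhds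
  obtain ⟨t, hcover⟩ := (hK.prod hK).elim_nhds_subcover' V hV
  refine (t.finite_toSet.biUnion fun p _ ↦ hVfin p p.2).subset ?_
  rintro γ ⟨_, ⟨x, hx, rfl⟩, hγx⟩
  obtain ⟨p, hpt, hxp⟩ := Set.mem_iUnion₂.mp (hcover (show (x, γ • x) ∈ K ×ˢ K from ⟨hx, hγx⟩))
  exact Set.mem_biUnion hpt ⟨x, hxp⟩

end DynRel

theorem fat_thickening_proper_discontinuity_general {W : Type*} [PartialOrder W]
    (ι : W → W)
    (Th : Set W) (hlow : IsLowerSet Th) (hfat : ∀ w : W, w ∈ Th ∨ ι w ∈ Th)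
    {Z : Type*} [TopologicalSpace Z]
    {Γ : Type*} [Group Γ] [MulAction Γ Z]
    {Λ : Type*} (δ : Z → Λ → W)
    (hkey : ∀ ξ ξ' : Z, DynRel Γ ξ ξ' → ∃ l l' : Λ, δ ξ' l' ≤ ι (δ ξ l))
    (Ω : Set Z) (hΩ : Ω = {ξ : Z | ∃ l : Λ, δ ξ l ∈ Th}ᶜ) :
    (∀ ξ ∈ Ω, ∀ ξ' ∈ Ω, ¬ DynRel Γ ξ ξ') ∧
    (∀ K : Set Z, K ⊆ Ω → IsCompact K → {γ : Γ | ((γ • K) ∩ K).Nonempty}.Finite) := by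
  subst hΩ
  have hnot : ∀ ξ ∈ (thickening δ Th)ᶜ, ∀ ξ' ∈ (thickening δ Th)ᶜ, ¬ DynRel Γ ξ ξ' :=
    fun _ hξ _ hξ' ↦ not_rel_of_mem_compl_thickening hlow hfat hkey hξ hξ'
  exact ⟨hnot, fun K hKΩ hK ↦
    hK.finite_smul_inter_nonempty_of_not_dynRel fun ξ hξ ξ' hξ' ↦ hnot ξ (hKΩ hξ) ξ' (hKΩ hξ')⟩

theorem fat_thickening_proper_discontinuity {W : Type*} [PartialOrder W] [Finite W]
    (ι : W → W) (hinv : ∀ w, ι (ι w) = w) (hrev : ∀ u v : W, u ≤ v → ι v ≤ ι u)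
    (Th : Set W) (hlow : IsLowerSet Th) (hfat : ∀ w : W, w ∈ Th ∨ ι w ∈ Th)
    {Z : Type*} [TopologicalSpace Z] [TopologicalSpace.MetrizableSpace Z]
    [LocallyCompactSpace Z]
    {Γ : Type*} [Group Γ] [MulAction Γ Z] [ContinuousConstSMul Γ Z]
    {Λ : Type*} (δ : Z → Λ → W)
    (hkey : ∀ ξ ξ' : Z, DynRel Γ ξ ξ' → ∃ l l' : Λ, δ ξ' l' ≤ ι (δ ξ l))
    (Ω : Set Z) (hΩ : Ω = {ξ : Z | ∃ l : Λ, δ ξ l ∈ Th}ᶜ)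
    (hΩopen : IsOpen Ω) (hΩinv : ∀ γ : Γ, γ • Ω = Ω) :
    (∀ ξ ∈ Ω, ∀ ξ' ∈ Ω, ¬ DynRel Γ ξ ξ') ∧
    (∀ K : Set Z, K ⊆ Ω → IsCompact K → {γ : Γ | ((γ • K) ∩ K).Nonempty}.Finite) :=
  fat_thickening_proper_discontinuity_general ι Th hlow hfat δ hkey Ω hΩ
end

section
/- Let S be a Hausdorff topological space, n ≥ 1, and a_1, …, a_n > 0 real weights with total mass M = Σ a_i. For z = (s_1, …, s_n) ∈ Sⁿ and s ∈ S, let μ_z({s}) = Σ_{i : s_i = s} a_i. Then the set of stable configurations { z ∈ Sⁿ : μ_z({s}) < M/2 for all s ∈ S } is open in the product topology on Sⁿ. -/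
/-! Near a configuration `z` in a Hausdorff space, points can only coincide where they already
coincide in `z`. So every fibre of a nearby configuration lies inside a fibre of `z`, and with
nonnegative weights the mass of every point near `z` is bounded by a point mass of `z`. -/

open Filter Topology

section PointMass

variable {ι S M : Type*} [Fintype ι]

/-- The mass `μ_z({s})` of the atomic measure `∑ i, a i • δ_{z i}` at `s`. -/
noncomputable def pointMass [AddCommMonoid M] (a : ι → M) (z : ι → S) (s : S) : M :=
  ∑ i, Set.indicator {j | z j = s} a i

theorem pointMass_le_of_fiber_subset [AddCommMonoid M] [PartialOrder M] [IsOrderedAddMonoid M]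
    {a : ι → M} (ha : ∀ i, 0 ≤ a i) {z w : ι → S} {s t : S} (h : ∀ i, w i = t → z i = s) :
    pointMass a w t ≤ pointMass a z s :=
  Finset.sum_le_sum fun i _ => Set.indicator_le_indicator_of_subset (fun j => h j) ha i

theorem exists_fiber_subset_of_eq_imp_eq {z w : ι → S} (h : ∀ i j, w i = w j → z i = z j)
    (t : S) : ∃ s, ∀ i, w i = t → z i = s := by
  by_cases ht : ∃ i, w i = t
  · obtain ⟨i, rfl⟩ := ht
    exact ⟨z i, fun j hj => h j i hj⟩
  · exact ⟨t, fun i hi => (ht ⟨i, hi⟩).elim⟩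

end PointMass

theorem eventually_nhds_eq_imp_eq {ι S : Type*} [Finite ι] [TopologicalSpace S] [T2Space S]
    (z : ι → S) : ∀ᶠ w in 𝓝 z, ∀ i j, w i = w j → z i = z j := by
  have hne : ∀ i j, ∀ᶠ w in 𝓝 z, z i ≠ z j → w i ≠ w j := fun i j => by
    by_cases hz : z i = z j
    · exact Eventually.of_forall fun _ h => (h hz).elim
    · have hopen : IsOpen {w : ι → S | w i ≠ w j} :=
        isOpen_ne_fun (continuous_apply i) (continuous_apply j)
      filter_upwards [hopen.mem_nhds hz] with w hw using fun _ => hw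
  simpa only [eventually_all, not_imp_not] using hne

theorem stable_configurations_open_general {S : Type*} [TopologicalSpace S] [T2Space S]
    (n : ℕ) (a : Fin n → ℝ) (ha : ∀ i, 0 < a i) :
    IsOpen {z : Fin n → S | ∀ s : S,
      (∑ i : Fin n, Set.indicator {j : Fin n | z j = s} a i) < (∑ i : Fin n, a i) / 2} := by
  change IsOpen {z : Fin n → S | ∀ s, pointMass a z s < (∑ i, a i) / 2}
  refine isOpen_iff_eventually.mpr fun z hz => ?_
  filter_upwards [eventually_nhds_eq_imp_eq z] with w hw t
  obtain ⟨s, hs⟩ := exists_fiber_subset_of_eq_imp_eq hw t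
  exact (pointMass_le_of_fiber_subset (fun i => (ha i).le) hs).trans_lt (hz s)

theorem stable_configurations_open {S : Type*} [TopologicalSpace S] [T2Space S]
    (n : ℕ) (hn : 1 ≤ n) (a : Fin n → ℝ) (ha : ∀ i, 0 < a i) :
    IsOpen {z : Fin n → S | ∀ s : S,
      (∑ i : Fin n, Set.indicator {j : Fin n | z j = s} a i) < (∑ i : Fin n, a i) / 2} :=
  stable_configurations_open_general n a ha
end
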